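/- arXiv:2402.07544 — 7 statements merged into one kernel-verified Lean document; each statement's English description precedes it below -/
import Mathlib

section
/- For all real numbers x, y with 0 ≤ x ≤ y ≤ ℓ, the probability that the random interval [I, S] does not intersect [x, y] equals (1/ℓ)·(ℓ − (y − x) − (r/2)·(2 − e^{−2(ℓ−y)/r} − e^{−2x/r})). -/
/-!
Almost surely `E ≥ 0`, so `[I, S]` misses `[x, y]` exactly when `S < x` or `y < I`, and these two
events are almost surely disjoint. The second one is `(ℓ - U) + (r/2)E < ℓ - y`, an event of the
first kind for the reflected variable `ℓ - U`, which is again uniform on `[0, ℓ]` and independent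
of `E`. Conditioning on `U`, for `0 ≤ a ≤ ℓ` and `c > 0`,
`P(U + cE < a) = (1/ℓ) ∫₀^a (1 - e^{-(a-u)/c}) du = (a - c + c e^{-a/c}) / ℓ`.
-/

open MeasureTheory ProbabilityTheory

/-- The uniform probability measure on `[0,ℓ]` (normalized Lebesgue measure). -/
noncomputable def unifMeasure (ℓ : ℝ) : Measure ℝ :=
  ProbabilityTheory.cond volume (Set.Icc 0 ℓ)

open Set Real

lemma Icc_inter_Icc_eq_empty_iff {a b x y : ℝ} (hab : a ≤ b) (hxy : x ≤ y) :
    Icc a b ∩ Icc x y = ∅ ↔ b < x ∨ y < a := by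
  rw [Icc_inter_Icc, Icc_eq_empty_iff, sup_le_iff, le_inf_iff, le_inf_iff]
  constructor
  · intro h
    by_contra! h'
    exact h ⟨⟨hab, h'.2⟩, h'.1, hxy⟩
  · rintro (h | h) ⟨⟨-, h₁⟩, h₂, -⟩ <;> linarith

lemma expMeasure_Iio {ρ : ℝ} (hρ : 0 < ρ) (t : ℝ) :
    expMeasure ρ (Iio t) = ENNReal.ofReal (if 0 ≤ t then 1 - exp (-(ρ * t)) else 0) := by
  rw [expMeasure, gammaMeasure, withDensity_apply _ measurableSet_Iio,
    setLIntegral_congr Iio_ae_eq_Iic]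
  exact lintegral_exponentialPDF_eq_antiDeriv hρ t

lemma integral_one_sub_exp_neg_sub_div {c : ℝ} (hc : c ≠ 0) (a : ℝ) :
    ∫ u in (0 : ℝ)..a, (1 - exp (-((a - u) / c))) = a - c + c * exp (-(a / c)) := by
  have hderiv (u : ℝ) : HasDerivAt (fun u => u - c * exp (-((a - u) / c)))
      (1 - exp (-((a - u) / c))) u := by
    have h := ((((hasDerivAt_id u).const_sub a).div_const c).neg.exp.const_mul c)
    refine ((hasDerivAt_id u).sub h).congr_deriv ?_
    field_simp
    rfl
  rw [intervalIntegral.integral_eq_sub_of_hasDerivAt (fun u _ => hderiv u)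
    (Continuous.intervalIntegrable (by fun_prop) 0 a)]
  simp

lemma setLIntegral_expMeasure_Iio_sub_div {c a ℓ : ℝ} (hc : 0 < c) (ha : 0 ≤ a) (haℓ : a ≤ ℓ) :
    ∫⁻ u in Icc 0 ℓ, expMeasure 1 (Iio ((a - u) / c))
      = ENNReal.ofReal (a - c + c * exp (-(a / c))) := by
  rw [← Icc_union_Ioc_eq_Icc ha haℓ, lintegral_union measurableSet_Ioc
    ((Iic_disjoint_Ioc le_rfl).mono_left Icc_subset_Iic_self)]
  have h_left : ∫⁻ u in Icc 0 a, expMeasure 1 (Iio ((a - u) / c))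
      = ∫⁻ u in Icc 0 a, ENNReal.ofReal (1 - exp (-((a - u) / c))) := by
    refine setLIntegral_congr_fun measurableSet_Icc fun u hu => ?_
    rw [expMeasure_Iio one_pos, if_pos (div_nonneg (by linarith [hu.2]) hc.le), one_mul]
  have h_right : ∫⁻ u in Ioc a ℓ, expMeasure 1 (Iio ((a - u) / c)) = 0 := by
    refine setLIntegral_eq_zero measurableSet_Ioc fun u hu => ?_
    rw [expMeasure_Iio one_pos, if_neg (not_le.mpr (div_neg_of_neg_of_pos (by linarith [hu.1]) hc)),
      ENNReal.ofReal_zero, Pi.zero_apply]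
  have h_nonneg (u : ℝ) (hu : u ∈ Icc 0 a) : 0 ≤ 1 - exp (-((a - u) / c)) := by
    rw [sub_nonneg, exp_le_one_iff, neg_nonpos]
    exact div_nonneg (by linarith [hu.2]) hc.le
  rw [h_left, h_right, add_zero, ← ofReal_integral_eq_lintegral_ofReal
    (Continuous.integrableOn_Icc (by fun_prop))
    ((ae_restrict_iff' measurableSet_Icc).mpr (ae_of_all _ h_nonneg)),
    integral_Icc_eq_integral_Ioc, ← intervalIntegral.integral_of_le ha,
    integral_one_sub_exp_neg_sub_div hc.ne']

lemma map_const_sub_unifMeasure (ℓ : ℝ) : (unifMeasure ℓ).map (fun u => ℓ - u) = unifMeasure ℓ := by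
  have h := (Measure.measurePreserving_sub_left volume ℓ).restrict_preimage
    (measurableSet_Icc (a := (0 : ℝ)) (b := ℓ))
  rw [preimage_const_sub_Icc, sub_self, sub_zero] at h
  rw [unifMeasure, ProbabilityTheory.cond, Measure.map_smul, h.map_eq]

lemma measure_preimage_prod_eq_lintegral_of_indepFun {Ω : Type*} [MeasurableSpace Ω]
    {μ : Measure Ω} [IsFiniteMeasure μ] {β γ : Type*} [MeasurableSpace β] [MeasurableSpace γ]
    {X : Ω → β} {Y : Ω → γ} (hX : Measurable X) (hY : Measurable Y)
    (hXY : IndepFun X Y μ) {s : Set (β × γ)} (hs : MeasurableSet s) :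
    μ ((fun ω => (X ω, Y ω)) ⁻¹' s) = ∫⁻ x, μ.map Y (Prod.mk x ⁻¹' s) ∂(μ.map X) := by
  rw [← Measure.prod_apply hs, ← (indepFun_iff_map_prod_eq_prod_map_map hX.aemeasurable
    hY.aemeasurable).mp hXY, Measure.map_apply (hX.prodMk hY) hs]

lemma sub_add_mul_exp_neg_div_nonneg {c : ℝ} (hc : 0 < c) (a : ℝ) :
    0 ≤ a - c + c * exp (-(a / c)) := by
  have h := mul_le_mul_of_nonneg_left (add_one_le_exp (-(a / c))) hc.le
  rw [mul_add, mul_neg, mul_div_cancel₀ a hc.ne'] at h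
  linarith

section RandomVariables

variable {Ω : Type*} [MeasurableSpace Ω] {μ : Measure Ω} {ℓ : ℝ} {U E : Ω → ℝ}

lemma measure_add_mul_lt_of_indepFun [IsFiniteMeasure μ] (hU : Measurable U) (hE : Measurable E)
    (hUdist : μ.map U = unifMeasure ℓ) (hEdist : μ.map E = expMeasure 1) (hind : IndepFun U E μ)
    (hℓ : 0 < ℓ) {c a : ℝ} (hc : 0 < c) (ha : 0 ≤ a) (haℓ : a ≤ ℓ) :
    μ {ω | U ω + c * E ω < a} = ENNReal.ofReal ((a - c + c * exp (-(a / c))) / ℓ) := by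
  have hs : MeasurableSet {p : ℝ × ℝ | p.1 + c * p.2 < a} :=
    measurableSet_lt (by fun_prop) measurable_const
  have hsection (u : ℝ) : Prod.mk u ⁻¹' {p : ℝ × ℝ | p.1 + c * p.2 < a} = Iio ((a - u) / c) := by
    ext e
    rw [mem_preimage, mem_ofPred_eq, mem_Iio, lt_div_iff₀ hc]
    constructor <;> intro h <;> linarith
  rw [← preimage_ofPred_eq (p := fun p : ℝ × ℝ => p.1 + c * p.2 < a) (f := fun ω => (U ω, E ω)),
    measure_preimage_prod_eq_lintegral_of_indepFun hU hE hind hs, hUdist, hEdist]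
  simp_rw [hsection]
  rw [unifMeasure, ProbabilityTheory.cond, lintegral_smul_measure, Real.volume_Icc,
    sub_zero, setLIntegral_expMeasure_Iio_sub_div hc ha haℓ, smul_eq_mul,
    ← ENNReal.ofReal_inv_of_pos hℓ, ← ENNReal.ofReal_mul (inv_nonneg.mpr hℓ.le), inv_mul_eq_div]

lemma map_const_sub_of_map_eq_unifMeasure (hU : Measurable U) (hUdist : μ.map U = unifMeasure ℓ) :
    μ.map (fun ω => ℓ - U ω) = unifMeasure ℓ := by
  rw [← map_const_sub_unifMeasure ℓ, ← hUdist, Measure.map_map (by fun_prop) hU]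
  rfl

end RandomVariables

/-- Fix `ℓ > 0` and `r > 0`. Let `U` be uniform on `[0,ℓ]` and `E` an independent
exponential variable with rate 1; set `I = U − (r/2)E` and `S = U + (r/2)E`. For all
`0 ≤ x ≤ y ≤ ℓ`, the probability that `[I,S]` does not intersect `[x,y]` equals
`(1/ℓ)·(ℓ − (y − x) − (r/2)·(2 − e^{−2(ℓ−y)/r} − e^{−2x/r}))`. -/
theorem stmt_2 {Ω : Type*} [MeasurableSpace Ω] (μ : Measure Ω) [IsProbabilityMeasure μ]
    (ℓ r : ℝ) (hℓ : 0 < ℓ) (hr : 0 < r)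
    (U E : Ω → ℝ) (hU : Measurable U) (hE : Measurable E)
    (hUdist : Measure.map U μ = unifMeasure ℓ)
    (hEdist : Measure.map E μ = expMeasure 1)
    (hind : IndepFun U E μ)
    (x y : ℝ) (hx : 0 ≤ x) (hxy : x ≤ y) (hyℓ : y ≤ ℓ) :
    μ {ω | Set.Icc (U ω - r / 2 * E ω) (U ω + r / 2 * E ω) ∩ Set.Icc x y = ∅}
      = ENNReal.ofReal ((1 / ℓ) *
          (ℓ - (y - x) - (r / 2) *
            (2 - Real.exp (-(2 * (ℓ - y)) / r) - Real.exp (-(2 * x) / r)))) := by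
  set c := r / 2 with hc_def
  have hc : 0 < c := half_pos hr
  have hE_nonneg : ∀ᵐ ω ∂μ, 0 ≤ E ω := by
    refine ae_of_ae_map hE.aemeasurable ?_
    rw [hEdist, ae_iff]
    simp only [not_le]
    exact (expMeasure_Iio one_pos 0).trans (by simp)
  have hevent : {ω | Icc (U ω - c * E ω) (U ω + c * E ω) ∩ Icc x y = ∅}
      =ᵐ[μ] ({ω | U ω + c * E ω < x} ∪ {ω | (ℓ - U ω) + c * E ω < ℓ - y} : Set Ω) := by
    refine Filter.eventuallyEq_set.mpr ?_
    filter_upwards [hE_nonneg] with ω hω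
    rw [Icc_inter_Icc_eq_empty_iff (by nlinarith) hxy, mem_union, mem_ofPred_eq,
      mem_ofPred_eq]
    constructor <;> rintro (h | h) <;> [left; right; left; right] <;> linarith
  have hdisj : AEDisjoint μ {ω | U ω + c * E ω < x} {ω | (ℓ - U ω) + c * E ω < ℓ - y} := by
    refine measure_mono_null (fun ω ⟨hA, hB⟩ => ?_) (ae_iff.mp hE_nonneg)
    simp only [mem_ofPred_eq] at hA hB ⊢
    nlinarith
  have hB_meas : MeasurableSet {ω | (ℓ - U ω) + c * E ω < ℓ - y} :=
    measurableSet_lt (by fun_prop) measurable_const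
  rw [measure_congr hevent, measure_union₀ hB_meas.nullMeasurableSet hdisj,
    measure_add_mul_lt_of_indepFun hU hE hUdist hEdist hind hℓ hc hx (hxy.trans hyℓ),
    measure_add_mul_lt_of_indepFun (by fun_prop) hE (map_const_sub_of_map_eq_unifMeasure hU hUdist)
      hEdist (hind.comp (measurable_const_sub ℓ) measurable_id) hℓ hc (sub_nonneg.mpr hyℓ)
      (by linarith),
    ← ENNReal.ofReal_add (div_nonneg (sub_add_mul_exp_neg_div_nonneg hc _) hℓ.le)
      (div_nonneg (sub_add_mul_exp_neg_div_nonneg hc _) hℓ.le)]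
  congr 1
  rw [hc_def]
  field_simp
  ring
end

section
/- For every x ∈ [0,ℓ] one has W(ℓ,2r) ≤ P(x ∉ [I, S]) ≤ W(ℓ,r); that is, the probability that the random interval [I, S] avoids the point x lies between W(ℓ,2r) and W(ℓ,r). -/
open MeasureTheory ProbabilityTheory

/-- `W ℓ r = 1 − (r/(2ℓ))·(1 − e^{−2ℓ/r})`. -/
noncomputable def W (ℓ r : ℝ) : ℝ := 1 - (r / (2 * ℓ)) * (1 - Real.exp (-(2 * ℓ) / r))

/-!
Given `U = u`, the interval `[u - cE, u + cE]` (with `c = r/2`) misses `x` exactly when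
`E < |x - u| / c`, an event of probability `1 - exp (-|x - u| / c)`. Averaging over `u ∈ [0, ℓ]`
gives `1 - (c/ℓ)(2 - a² - b²)` with `a = exp (-x/r)`, `b = exp (-(ℓ - x)/r)`, while `W(ℓ,r)` and
`W(ℓ,2r)` are the same expression with `2 - a² - b²` replaced by `1 - a²b²` and `2 - 2ab`. The two
bounds are therefore `(1 - a²)(1 - b²) ≥ 0` and `a² + b² ≥ 2ab`.
-/

open Real Set

lemma expMeasure_Iio_s3 {r t : ℝ} (hr : 0 < r) (ht : 0 ≤ t) :
    expMeasure r (Iio t) = ENNReal.ofReal (1 - exp (-(r * t))) := by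
  have := isProbabilityMeasure_expMeasure hr
  have : NullSingletonClass (expMeasure r) := nullSingletonClass_withDensity _
  rw [measure_congr Iio_ae_eq_Iic, ← ofReal_cdf, cdf_expMeasure_eq hr, if_pos ht]

lemma setOf_notMem_Icc_sub_add {c : ℝ} (hc : 0 < c) (x u : ℝ) :
    {e : ℝ | x ∉ Icc (u - c * e) (u + c * e)} = Iio (|x - u| / c) := by
  ext e
  simp only [mem_ofPred_eq, mem_Icc, not_and_or, not_le, mem_Iio, lt_div_iff₀ hc, lt_abs]
  constructor <;> rintro (h | h) <;> first | (left; linarith) | (right; linarith)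

lemma IndepFun.measure_preimage_prodMk {Ω α β : Type*} [MeasurableSpace Ω] [MeasurableSpace α]
    [MeasurableSpace β] {μ : Measure Ω} [IsFiniteMeasure μ] {X : Ω → α} {Y : Ω → β}
    (hX : Measurable X) (hY : Measurable Y) (hXY : IndepFun X Y μ)
    {s : Set (α × β)} (hs : MeasurableSet s) :
    μ ((fun ω ↦ (X ω, Y ω)) ⁻¹' s) = ∫⁻ a, μ.map Y (Prod.mk a ⁻¹' s) ∂μ.map X := by
  rw [← Measure.map_apply (hX.prodMk hY) hs,
    (indepFun_iff_map_prod_eq_prod_map_map hX.aemeasurable hY.aemeasurable).mp hXY,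
    Measure.prod_apply hs]

lemma integral_exp_neg_div {c : ℝ} (hc : c ≠ 0) (a : ℝ) :
    ∫ v in (0)..a, exp (-(v / c)) = c * (1 - exp (-(a / c))) := by
  rw [intervalIntegral.integral_comp_div (fun t ↦ exp (-t)) hc, intervalIntegral.integral_comp_neg,
    integral_exp, zero_div, neg_zero, exp_zero, smul_eq_mul]

lemma integral_exp_neg_abs_div {c : ℝ} (hc : c ≠ 0) {a : ℝ} (ha : 0 ≤ a) :
    ∫ v in (0)..a, exp (-(|v| / c)) = c * (1 - exp (-(a / c))) := by
  rw [← integral_exp_neg_div hc]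
  refine intervalIntegral.integral_congr fun v hv ↦ ?_
  rw [uIcc_of_le ha] at hv
  simp only [abs_of_nonneg hv.1]

lemma integral_exp_neg_abs_sub_div {c : ℝ} (hc : c ≠ 0) {ℓ x : ℝ} (hx : x ∈ Icc 0 ℓ) :
    ∫ u in (0)..ℓ, exp (-(|x - u| / c)) =
      c * (2 - exp (-(x / c)) - exp (-((ℓ - x) / c))) := by
  have hint : ∀ a b : ℝ, IntervalIntegrable (fun v ↦ exp (-(|v| / c))) volume a b :=
    fun a b ↦ (by fun_prop : Continuous fun v : ℝ ↦ exp (-(|v| / c))).intervalIntegrable a b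
  have hreflect : ∫ v in (x - ℓ)..0, exp (-(|v| / c)) = ∫ v in (0)..(ℓ - x), exp (-(|v| / c)) := by
    simpa only [abs_neg, neg_zero, neg_sub] using
      (intervalIntegral.integral_comp_neg (a := 0) (b := ℓ - x) fun v ↦ exp (-(|v| / c))).symm
  rw [intervalIntegral.integral_comp_sub_left (fun v ↦ exp (-(|v| / c))), sub_zero,
    ← intervalIntegral.integral_add_adjacent_intervals (hint _ 0) (hint 0 _), hreflect,
    integral_exp_neg_abs_div hc (sub_nonneg.2 hx.2), integral_exp_neg_abs_div hc hx.1]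
  ring

lemma lintegral_ofReal_unifMeasure {ℓ : ℝ} (hℓ : 0 < ℓ) {f : ℝ → ℝ}
    (hf : IntegrableOn f (Icc 0 ℓ)) (hf₀ : ∀ u ∈ Icc 0 ℓ, 0 ≤ f u) :
    ∫⁻ u, ENNReal.ofReal (f u) ∂unifMeasure ℓ = ENNReal.ofReal ((∫ u in (0)..ℓ, f u) / ℓ) := by
  rw [unifMeasure, ProbabilityTheory.cond, lintegral_smul_measure, Real.volume_Icc, sub_zero,
    ← ofReal_integral_eq_lintegral_ofReal hf (ae_restrict_of_forall_mem measurableSet_Icc hf₀),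
    integral_Icc_eq_integral_Ioc, ← intervalIntegral.integral_of_le hℓ.le,
    ENNReal.ofReal_div_of_pos hℓ, smul_eq_mul, div_eq_mul_inv, mul_comm]

lemma measure_notMem_Icc_sub_add {Ω : Type*} [MeasurableSpace Ω] {μ : Measure Ω}
    [IsFiniteMeasure μ] {ℓ c : ℝ} (hℓ : 0 < ℓ) (hc : 0 < c) {U E : Ω → ℝ}
    (hU : Measurable U) (hE : Measurable E) (hUdist : μ.map U = unifMeasure ℓ)
    (hEdist : μ.map E = expMeasure 1) (hind : IndepFun U E μ) {x : ℝ} (hx : x ∈ Icc 0 ℓ) :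
    μ {ω | x ∉ Icc (U ω - c * E ω) (U ω + c * E ω)} =
      ENNReal.ofReal (1 - c / ℓ * (2 - exp (-(x / c)) - exp (-((ℓ - x) / c)))) := by
  have hS : MeasurableSet {p : ℝ × ℝ | x ∉ Icc (p.1 - c * p.2) (p.1 + c * p.2)} :=
    ((measurableSet_le (f := fun p : ℝ × ℝ ↦ p.1 - c * p.2) (by fun_prop) measurable_const).inter
      (measurableSet_le (g := fun p : ℝ × ℝ ↦ p.1 + c * p.2) measurable_const (by fun_prop))).compl
  have hslice (u : ℝ) : expMeasure 1 {e | x ∉ Icc (u - c * e) (u + c * e)} =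
      ENNReal.ofReal (1 - exp (-(|x - u| / c))) := by
    rw [setOf_notMem_Icc_sub_add hc, expMeasure_Iio_s3 one_pos (by positivity), one_mul]
  have hf₀ (u : ℝ) : 0 ≤ 1 - exp (-(|x - u| / c)) :=
    sub_nonneg.2 (exp_le_one_iff.2 (neg_nonpos.2 (by positivity)))
  have hg : Continuous fun u ↦ exp (-(|x - u| / c)) := by fun_prop
  change μ ((fun ω ↦ (U ω, E ω)) ⁻¹' {p : ℝ × ℝ | x ∉ Icc (p.1 - c * p.2) (p.1 + c * p.2)}) = _
  rw [IndepFun.measure_preimage_prodMk hU hE hind hS, hUdist, hEdist]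
  simp only [preimage_ofPred_eq, hslice]
  rw [lintegral_ofReal_unifMeasure hℓ (f := fun u ↦ 1 - exp (-(|x - u| / c)))
      (continuous_const.sub hg).integrableOn_Icc fun u _ ↦ hf₀ u,
    intervalIntegral.integral_sub intervalIntegrable_const (hg.intervalIntegrable _ _),
    integral_exp_neg_abs_sub_div hc.ne' hx, intervalIntegral.integral_const, smul_eq_mul, mul_one,
    sub_zero]
  congr 1
  field_simp

lemma two_sub_exp_neg_sub_exp_neg_le (s t : ℝ) :
    2 - exp (-s) - exp (-t) ≤ 2 * (1 - exp (-((s + t) / 2))) := by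
  have hs : exp (-s) = exp (-(s / 2)) ^ 2 := by rw [← exp_nat_mul]; ring_nf
  have ht : exp (-t) = exp (-(t / 2)) ^ 2 := by rw [← exp_nat_mul]; ring_nf
  have hst : exp (-((s + t) / 2)) = exp (-(s / 2)) * exp (-(t / 2)) := by
    rw [← exp_add]; ring_nf
  rw [hs, ht, hst]
  nlinarith [sq_nonneg (exp (-(s / 2)) - exp (-(t / 2)))]

lemma one_sub_exp_neg_add_le {s t : ℝ} (hs : 0 ≤ s) (ht : 0 ≤ t) :
    1 - exp (-(s + t)) ≤ 2 - exp (-s) - exp (-t) := by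
  have hs' : exp (-s) ≤ 1 := exp_le_one_iff.2 (neg_nonpos.2 hs)
  have ht' : exp (-t) ≤ 1 := exp_le_one_iff.2 (neg_nonpos.2 ht)
  rw [neg_add, exp_add]
  nlinarith [mul_nonneg (sub_nonneg.2 hs') (sub_nonneg.2 ht')]

/-- Fix `ℓ > 0` and `r > 0`. Let `U` be uniform on `[0,ℓ]` and `E` an independent
exponential variable with rate 1; set `I = U − (r/2)E` and `S = U + (r/2)E`. For every
`x ∈ [0,ℓ]`, the probability that `[I,S]` avoids the point `x` lies between `W(ℓ,2r)`
and `W(ℓ,r)`. -/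
theorem stmt_3 {Ω : Type*} [MeasurableSpace Ω] (μ : Measure Ω) [IsProbabilityMeasure μ]
    (ℓ r : ℝ) (hℓ : 0 < ℓ) (hr : 0 < r)
    (U E : Ω → ℝ) (hU : Measurable U) (hE : Measurable E)
    (hUdist : Measure.map U μ = unifMeasure ℓ)
    (hEdist : Measure.map E μ = expMeasure 1)
    (hind : IndepFun U E μ)
    (x : ℝ) (hx : x ∈ Set.Icc 0 ℓ) :
    ENNReal.ofReal (W ℓ (2 * r))
        ≤ μ {ω | x ∉ Set.Icc (U ω - r / 2 * E ω) (U ω + r / 2 * E ω)} ∧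
      μ {ω | x ∉ Set.Icc (U ω - r / 2 * E ω) (U ω + r / 2 * E ω)}
        ≤ ENNReal.ofReal (W ℓ r) := by
  set c := r / 2 with hc_def
  have hc : 0 < c := half_pos hr
  rw [measure_notMem_Icc_sub_add hℓ hc hU hE hUdist hEdist hind hx]
  have hsum : x / c + (ℓ - x) / c = 2 * ℓ / r := by field_simp; ring
  have hW : W ℓ r = 1 - c / ℓ * (1 - exp (-(x / c + (ℓ - x) / c))) := by
    rw [W, hsum, hc_def]; field_simp
  have hW₂ : W ℓ (2 * r) = 1 - c / ℓ * (2 * (1 - exp (-((x / c + (ℓ - x) / c) / 2)))) := by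
    rw [W, hsum, hc_def]; field_simp
  rw [hW, hW₂]
  constructor <;> apply ENNReal.ofReal_le_ofReal <;> gcongr 1 - c / ℓ * ?_
  · exact two_sub_exp_neg_sub_exp_neg_le _ _
  · exact one_sub_exp_neg_add_le (div_nonneg hx.1 hc.le) (div_nonneg (sub_nonneg.2 hx.2) hc.le)
end

section
/- For all real numbers x, y with 0 ≤ x ≤ y ≤ ℓ, the probability that the random interval [I, S] contains the whole segment [x, y] equals (r/(2ℓ))·(2e^{−(y−x)/r} − e^{−2(ℓ−x)/r} − e^{−2y/r}). -/
/-!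
Given `U = u`, the interval `[u - rE/2, u + rE/2]` covers `[x, y]` exactly when
`E ≥ 2 max(u - x, y - u) / r`, an event of probability `exp(-2 max(u - x, y - u) / r)`.
By independence the probability sought is the average of this over `u ∈ [0, ℓ]`; the maximum
switches branches at the midpoint `(x + y) / 2`, and on each side the integrand is a plain
exponential.
-/

open MeasureTheory ProbabilityTheory

open Real Set

lemma expMeasure_Ici {a : ℝ} (ha : 0 < a) {c : ℝ} (hc : 0 ≤ c) :
    expMeasure a (Ici c) = ENNReal.ofReal (exp (-(a * c))) := by
  have := isProbabilityMeasure_expMeasure ha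
  have hatom : expMeasure a {c} = 0 :=
    withDensity_absolutelyContinuous _ _ (measure_singleton c)
  rw [← compl_Iio, prob_compl_eq_one_sub measurableSet_Iio, measure_congr (Iio_ae_eq_Iic' hatom),
    ← ofReal_cdf, cdf_expMeasure_eq ha, if_pos hc, ← ENNReal.ofReal_one,
    ← ENNReal.ofReal_sub _ (sub_nonneg.2 (exp_le_one_iff.2 (by nlinarith))), sub_sub_cancel]

lemma ProbabilityTheory.IndepFun.measure_preimage_prodMk_eq_lintegral {Ω α β : Type*}
    [MeasurableSpace Ω] [MeasurableSpace α] [MeasurableSpace β] {μ : Measure Ω} [IsFiniteMeasure μ]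
    {X : Ω → α} {Y : Ω → β} (hX : Measurable X) (hY : Measurable Y) (h : IndepFun X Y μ)
    {s : Set (α × β)} (hs : MeasurableSet s) :
    μ ((fun ω => (X ω, Y ω)) ⁻¹' s) = ∫⁻ a, μ.map Y (Prod.mk a ⁻¹' s) ∂μ.map X := by
  rw [← Measure.map_apply (hX.prodMk hY) hs,
    (indepFun_iff_map_prod_eq_prod_map_map hX.aemeasurable hY.aemeasurable).mp h,
    Measure.prod_apply hs]

lemma lintegral_unifMeasure {ℓ : ℝ} (hℓ : 0 < ℓ) {f : ℝ → ℝ} (hf : IntegrableOn f (Icc 0 ℓ))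
    (hf_nonneg : 0 ≤ f) :
    ∫⁻ u, ENNReal.ofReal (f u) ∂unifMeasure ℓ = ENNReal.ofReal ((∫ u in 0..ℓ, f u) / ℓ) := by
  rw [unifMeasure, ProbabilityTheory.cond, lintegral_smul_measure,
    ← ofReal_integral_eq_lintegral_ofReal hf (ae_of_all _ hf_nonneg), Real.volume_Icc, sub_zero,
    ← ENNReal.ofReal_inv_of_pos hℓ, smul_eq_mul, ← ENNReal.ofReal_mul (inv_nonneg.2 hℓ.le),
    integral_Icc_eq_integral_Ioc, ← intervalIntegral.integral_of_le hℓ.le, inv_mul_eq_div]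

lemma Icc_subset_Icc_sub_add_iff {x y u e r : ℝ} (hxy : x ≤ y) (hr : 0 < r) :
    Icc x y ⊆ Icc (u - r / 2 * e) (u + r / 2 * e) ↔ 2 * max (u - x) (y - u) / r ≤ e := by
  rw [Icc_subset_Icc_iff hxy, div_le_iff₀ hr, mul_max_of_nonneg _ _ zero_le_two, max_le_iff]
  constructor <;> rintro ⟨h₁, h₂⟩ <;> constructor <;> linarith

lemma integral_exp_mul_add {k : ℝ} (hk : k ≠ 0) (d a b : ℝ) :
    ∫ u in a..b, exp (k * u + d) = (exp (k * b + d) - exp (k * a + d)) / k := by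
  rw [intervalIntegral.integral_comp_mul_add exp hk, integral_exp, smul_eq_mul, inv_mul_eq_div]

lemma integral_exp_neg_two_mul_max_div {r : ℝ} (hr : r ≠ 0) {a b x y : ℝ}
    (ha : a ≤ (x + y) / 2) (hb : (x + y) / 2 ≤ b) :
    ∫ u in a..b, exp (-(2 * max (u - x) (y - u)) / r)
      = r / 2 * (2 * exp (-(y - x) / r) - exp (-(2 * (b - x)) / r)
          - exp (-(2 * (y - a)) / r)) := by
  set m := (x + y) / 2 with hm
  have hcont : Continuous fun u => exp (-(2 * max (u - x) (y - u)) / r) := by fun_prop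
  have hleft : ∫ u in a..m, exp (-(2 * max (u - x) (y - u)) / r)
      = ∫ u in a..m, exp (2 / r * u + -(2 * y) / r) := by
    refine intervalIntegral.integral_congr fun u hu => ?_
    rw [uIcc_of_le ha] at hu
    simp only [max_eq_right (by linarith [hu.2] : u - x ≤ y - u)]
    ring_nf
  have hright : ∫ u in m..b, exp (-(2 * max (u - x) (y - u)) / r)
      = ∫ u in m..b, exp (-(2 / r) * u + 2 * x / r) := by
    refine intervalIntegral.integral_congr fun u hu => ?_
    rw [uIcc_of_le hb] at hu
    simp only [max_eq_left (by linarith [hu.1] : y - u ≤ u - x)]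
    ring_nf
  rw [← intervalIntegral.integral_add_adjacent_intervals (hcont.intervalIntegrable a m)
    (hcont.intervalIntegrable m b), hleft, hright, integral_exp_mul_add (by positivity),
    integral_exp_mul_add (by simpa using hr), hm]
  field_simp
  ring_nf

/-- Fix `ℓ > 0` and `r > 0`. Let `U` be uniform on `[0,ℓ]` and `E` an independent
exponential variable with rate 1; set `I = U − (r/2)E` and `S = U + (r/2)E`. For all
`0 ≤ x ≤ y ≤ ℓ`, the probability that `[I,S]` contains the whole segment `[x,y]` equals
`(r/(2ℓ))·(2e^{−(y−x)/r} − e^{−2(ℓ−x)/r} − e^{−2y/r})`. -/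
theorem stmt_4 {Ω : Type*} [MeasurableSpace Ω] (μ : Measure Ω) [IsProbabilityMeasure μ]
    (ℓ r : ℝ) (hℓ : 0 < ℓ) (hr : 0 < r)
    (U E : Ω → ℝ) (hU : Measurable U) (hE : Measurable E)
    (hUdist : Measure.map U μ = unifMeasure ℓ)
    (hEdist : Measure.map E μ = expMeasure 1)
    (hind : IndepFun U E μ)
    (x y : ℝ) (hx : 0 ≤ x) (hxy : x ≤ y) (hyℓ : y ≤ ℓ) :
    μ {ω | Set.Icc x y ⊆ Set.Icc (U ω - r / 2 * E ω) (U ω + r / 2 * E ω)}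
      = ENNReal.ofReal ((r / (2 * ℓ)) *
          (2 * Real.exp (-(y - x) / r) - Real.exp (-(2 * (ℓ - x)) / r)
            - Real.exp (-(2 * y) / r))) := by
  let threshold u := 2 * max (u - x) (y - u) / r
  have hthreshold u : 0 ≤ threshold u :=
    div_nonneg (by linarith [le_max_left (u - x) (y - u), le_max_right (u - x) (y - u)]) hr.le
  let A : Set (ℝ × ℝ) := {p | threshold p.1 ≤ p.2}
  have hA : MeasurableSet A := measurableSet_le (by fun_prop) measurable_snd
  calc μ {ω | Icc x y ⊆ Icc (U ω - r / 2 * E ω) (U ω + r / 2 * E ω)}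
      = μ ((fun ω => (U ω, E ω)) ⁻¹' A) := by
        congr 1; ext ω; exact Icc_subset_Icc_sub_add_iff hxy hr
    _ = ∫⁻ u, expMeasure 1 (Ici (threshold u)) ∂unifMeasure ℓ := by
        rw [hind.measure_preimage_prodMk_eq_lintegral hU hE hA, hUdist, hEdist]; rfl
    _ = ∫⁻ u, ENNReal.ofReal (exp (-(2 * max (u - x) (y - u)) / r)) ∂unifMeasure ℓ := by
        simp only [expMeasure_Ici one_pos (hthreshold _), one_mul, threshold, neg_div]
    _ = _ := by
        rw [lintegral_unifMeasure hℓ (by fun_prop : Continuous _).integrableOn_Icc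
          (fun _ => (exp_pos _).le), integral_exp_neg_two_mul_max_div hr.ne' (by linarith)
          (by linarith), sub_zero]
        ring_nf
end

section
/- Fix r > 0 and for ℓ > 0 define K₀(ℓ) = (4/(r³ℓ²))·∫₀^ℓ z²(ℓ − z)e^{−2z/r} dz. Then lim_{ℓ→0⁺} K₀(ℓ) = 0, lim_{ℓ→∞} ℓ·K₀(ℓ) = 1, and sup_{ℓ>0} K₀(ℓ) < ∞. -/
/-!
Write `a = 2 / r` and `I(ℓ) = ∫₀^ℓ z²(ℓ - z) e^{-az} dz`, so that `K(ℓ) = (4 / r³) I(ℓ) / ℓ²`.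
An explicit antiderivative gives
`I(ℓ) = 2ℓ/a³ - 6/a⁴ + e^{-aℓ} (ℓ²/a² + 4ℓ/a³ + 6/a⁴)`, hence `I(ℓ)/ℓ → 2/a³ = r³/4` and
`ℓ K(ℓ) → 1`. Bounding the integrand by `ℓ³`, resp. by `2ℓ/a²` (from `x²/2 ≤ eˣ`), gives
`K(ℓ) ≤ 4ℓ²/r³` and `K(ℓ) ≤ 2/r`.
-/

open MeasureTheory Filter Topology Set Real

noncomputable def kernelIntegral (a ℓ : ℝ) : ℝ :=
  ∫ z in (0:ℝ)..ℓ, z ^ 2 * (ℓ - z) * exp (-a * z)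

lemma kernelIntegral_eq {a : ℝ} (ha : a ≠ 0) (ℓ : ℝ) :
    kernelIntegral a ℓ = 2 * ℓ / a ^ 3 - 6 / a ^ 4
      + exp (-a * ℓ) * (ℓ ^ 2 / a ^ 2 + 4 * ℓ / a ^ 3 + 6 / a ^ 4) := by
  -- antiderivative `-exp (-a z) q(z)`, where `a q - q' = z²(ℓ - z)`
  let q : ℝ → ℝ := fun z => -z ^ 3 / a + (ℓ / a - 3 / a ^ 2) * z ^ 2
    + (2 * ℓ / a ^ 2 - 6 / a ^ 3) * z + (2 * ℓ / a ^ 3 - 6 / a ^ 4)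
  have hq : ∀ x, HasDerivAt q (-3 * x ^ 2 / a + (ℓ / a - 3 / a ^ 2) * (2 * x)
      + (2 * ℓ / a ^ 2 - 6 / a ^ 3)) x := fun x => by
    have := ((((hasDerivAt_pow 3 x).neg.div_const a).add
      ((hasDerivAt_pow 2 x).const_mul (ℓ / a - 3 / a ^ 2))).add
      ((hasDerivAt_id x).const_mul (2 * ℓ / a ^ 2 - 6 / a ^ 3))).add_const
      (2 * ℓ / a ^ 3 - 6 / a ^ 4)
    exact this.congr_deriv (by norm_num)
  have hexp : ∀ x, HasDerivAt (fun z => exp (-a * z)) (-a * exp (-a * x)) x := fun x => by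
    simpa [mul_comm] using ((hasDerivAt_id x).const_mul (-a)).exp
  have hderiv : ∀ x ∈ uIcc (0:ℝ) ℓ,
      HasDerivAt (fun z => -(exp (-a * z) * q z)) (x ^ 2 * (ℓ - x) * exp (-a * x)) x := by
    intro x _
    refine ((hexp x).mul (hq x)).neg.congr_deriv ?_
    simp only [q]
    field_simp
    ring
  rw [kernelIntegral, intervalIntegral.integral_eq_sub_of_hasDerivAt hderiv
    (by apply Continuous.intervalIntegrable; fun_prop)]
  simp only [q, mul_zero, exp_zero]
  field_simp
  ring

lemma kernelIntegral_nonneg (a : ℝ) {ℓ : ℝ} (hℓ : 0 ≤ ℓ) : 0 ≤ kernelIntegral a ℓ :=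
  intervalIntegral.integral_nonneg hℓ fun z hz =>
    mul_nonneg (mul_nonneg (sq_nonneg z) (sub_nonneg.2 hz.2)) (exp_pos _).le

lemma kernelIntegral_le_mul {a ℓ C : ℝ} (hℓ : 0 ≤ ℓ)
    (h : ∀ z ∈ Icc 0 ℓ, z ^ 2 * (ℓ - z) * exp (-a * z) ≤ C) : kernelIntegral a ℓ ≤ ℓ * C := by
  have := intervalIntegral.integral_mono_on hℓ
    (by apply Continuous.intervalIntegrable; fun_prop) (intervalIntegrable_const (μ := volume)) h
  simpa [kernelIntegral] using this

lemma kernelIntegral_le_pow_four {a ℓ : ℝ} (ha : 0 ≤ a) (hℓ : 0 ≤ ℓ) :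
    kernelIntegral a ℓ ≤ ℓ ^ 4 := by
  have := kernelIntegral_le_mul (a := a) (C := ℓ ^ 3) hℓ fun z ⟨hz0, hzℓ⟩ => by
    have hexp : exp (-a * z) ≤ 1 := exp_le_one_iff.2 (by nlinarith)
    calc z ^ 2 * (ℓ - z) * exp (-a * z) ≤ ℓ ^ 2 * ℓ * 1 := by
          gcongr
          linarith
      _ = ℓ ^ 3 := by ring
  rwa [← pow_succ'] at this

lemma sq_mul_exp_neg_mul_le {a z : ℝ} (ha : 0 < a) (hz : 0 ≤ z) :
    z ^ 2 * exp (-a * z) ≤ 2 / a ^ 2 := by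
  have h := pow_div_factorial_le_exp (a * z) (mul_nonneg ha.le hz) 2
  rw [neg_mul, exp_neg, ← div_eq_mul_inv, div_le_div_iff₀ (exp_pos _) (by positivity)]
  norm_num [Nat.factorial] at h
  nlinarith

lemma kernelIntegral_le_sq {a ℓ : ℝ} (ha : 0 < a) (hℓ : 0 ≤ ℓ) :
    kernelIntegral a ℓ ≤ 2 * ℓ ^ 2 / a ^ 2 := by
  have := kernelIntegral_le_mul (a := a) (C := ℓ * (2 / a ^ 2)) hℓ fun z ⟨hz0, hzℓ⟩ =>
    calc z ^ 2 * (ℓ - z) * exp (-a * z) = (ℓ - z) * (z ^ 2 * exp (-a * z)) := by ring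
      _ ≤ ℓ * (2 / a ^ 2) := by
          gcongr
          · linarith
          exact sq_mul_exp_neg_mul_le ha hz0
  calc kernelIntegral a ℓ ≤ ℓ * (ℓ * (2 / a ^ 2)) := this
    _ = 2 * ℓ ^ 2 / a ^ 2 := by ring

lemma tendsto_kernelIntegral_div_atTop {a : ℝ} (ha : 0 < a) :
    Tendsto (fun ℓ => kernelIntegral a ℓ / ℓ) atTop (𝓝 (2 / a ^ 3)) := by
  have hexp : Tendsto (fun ℓ : ℝ => exp (-a * ℓ)) atTop (𝓝 0) := by
    simpa using tendsto_rpow_mul_exp_neg_mul_atTop_nhds_zero 0 a ha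
  have hmul : Tendsto (fun ℓ : ℝ => ℓ * exp (-a * ℓ)) atTop (𝓝 0) := by
    simpa using tendsto_rpow_mul_exp_neg_mul_atTop_nhds_zero 1 a ha
  have hinv := tendsto_inv_atTop_zero (𝕜 := ℝ)
  have hlim := ((tendsto_const_nhds (x := 2 / a ^ 3)).sub (hinv.const_mul (6 / a ^ 4))).add
    (((hmul.div_const (a ^ 2)).add (hexp.mul_const (4 / a ^ 3))).add
      ((hexp.mul hinv).mul_const (6 / a ^ 4)))
  simp only [mul_zero, zero_div, zero_mul, sub_zero, add_zero] at hlim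
  refine hlim.congr' ?_
  filter_upwards [eventually_gt_atTop 0] with ℓ hℓ
  rw [kernelIntegral_eq ha.ne']
  field_simp

/-- Fix `r > 0` and let `K₀(ℓ) = (4/(r³ℓ²))·∫₀^ℓ z²(ℓ−z)e^{−2z/r} dz`.
Then `lim_{ℓ→0⁺} K₀(ℓ) = 0`, `lim_{ℓ→∞} ℓ·K₀(ℓ) = 1`, and `sup_{ℓ>0} K₀(ℓ) < ∞`. -/
theorem stmt_16 (r : ℝ) (hr : 0 < r) (K : ℝ → ℝ)
    (hK : ∀ ℓ : ℝ, 0 < ℓ →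
      K ℓ = (4 / (r ^ 3 * ℓ ^ 2)) *
        ∫ z in (0:ℝ)..ℓ, z ^ 2 * (ℓ - z) * Real.exp (-(2 * z) / r)) :
    Filter.Tendsto K (nhdsWithin 0 (Set.Ioi 0)) (nhds 0) ∧
    Filter.Tendsto (fun ℓ : ℝ => ℓ * K ℓ) Filter.atTop (nhds 1) ∧
    BddAbove (K '' Set.Ioi 0) := by
  have ha : 0 < 2 / r := by positivity
  have hKI : ∀ ℓ, 0 < ℓ → K ℓ = 4 / r ^ 3 * (kernelIntegral (2 / r) ℓ / ℓ ^ 2) := by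
    intro ℓ hℓ
    have hexp (z : ℝ) : -(2 * z) / r = -(2 / r) * z := by ring
    rw [hK ℓ hℓ, kernelIntegral]
    simp_rw [hexp]
    ring
  refine ⟨?_, ?_, ⟨2 / r, ?_⟩⟩
  · have hsq : Tendsto (fun ℓ : ℝ => 4 / r ^ 3 * ℓ ^ 2) (𝓝[>] 0) (𝓝 0) := by
      refine (Continuous.tendsto' (by fun_prop) 0 0 ?_).mono_left nhdsWithin_le_nhds
      simp
    refine tendsto_of_tendsto_of_tendsto_of_le_of_le' tendsto_const_nhds hsq ?_ ?_ <;>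
      filter_upwards [self_mem_nhdsWithin] with ℓ (hℓ : 0 < ℓ) <;> rw [hKI ℓ hℓ]
    · have := kernelIntegral_nonneg (2 / r) hℓ.le
      positivity
    · gcongr
      rw [div_le_iff₀ (by positivity), ← pow_add]
      exact kernelIntegral_le_pow_four ha.le hℓ.le
  · have hlim := (tendsto_kernelIntegral_div_atTop ha).const_mul (4 / r ^ 3)
    rw [show 4 / r ^ 3 * (2 / (2 / r) ^ 3) = 1 by field_simp; norm_num] at hlim
    refine hlim.congr' ?_
    filter_upwards [eventually_gt_atTop 0] with ℓ hℓ
    rw [hKI ℓ hℓ]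
    field_simp
  · rintro _ ⟨ℓ, hℓ : 0 < ℓ, rfl⟩
    calc K ℓ = 4 / r ^ 3 * (kernelIntegral (2 / r) ℓ / ℓ ^ 2) := hKI ℓ hℓ
      _ ≤ 4 / r ^ 3 * (2 * ℓ ^ 2 / (2 / r) ^ 2 / ℓ ^ 2) := by
          gcongr
          exact kernelIntegral_le_sq ha hℓ.le
      _ = 2 / r := by field_simp; ring
end

section
/- In the Euclidean plane ℝ², let 𝒞 be an open ball, let x, y ∈ 𝒞, and let A, B ∈ ℝ² \ 𝒞 be such that the closed segment [A,B] meets 𝒞. Suppose that x and y lie in two different connected components of 𝒞 \ [A,B]. Then for every closed ball ℬ whose boundary sphere contains both A and B, at least one of x and y belongs to ℬ. -/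
/-!
Since `𝒞` is convex, `[x, y] ⊆ 𝒞`; if it missed `[A, B]` it would join `x` to `y` inside
`𝒞 \ [A, B]`, so some `w` lies on both segments. The difference of powers
`ψ z = |z - c'|² - |z - c|²` is an affine function of `z`. At `A` and `B` it is at most
`ρ'² - ρ²`, while at a point of `𝒞` outside `ℬ` it exceeds `ρ'² - ρ²`; evaluating `ψ w` along
both segments rules out that `x` and `y` both lie outside `ℬ`.
-/

open Metric Set
open scoped RealInnerProductSpace

theorem Convex.segment_inter_nonempty_of_connectedComponentIn_ne {E : Type*}
    [AddCommGroup E] [Module ℝ E] [TopologicalSpace E] [ContinuousAdd E] [ContinuousSMul ℝ E]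
    {s t : Set E} (hs : Convex ℝ s) {x y : E} (hx : x ∈ s) (hy : y ∈ s)
    (hxy : connectedComponentIn (s \ t) x ≠ connectedComponentIn (s \ t) y) :
    (segment ℝ x y ∩ t).Nonempty := by
  by_contra hdisj
  have hsub : segment ℝ x y ⊆ s \ t := fun z hz =>
    ⟨hs.segment_subset hx hy hz, fun hzt => hdisj ⟨z, hz, hzt⟩⟩
  exact hxy <| connectedComponentIn_eq <|
    (convex_segment x y).isPreconnected.subset_connectedComponentIn (left_mem_segment ℝ x y)
      hsub (right_mem_segment ℝ x y)

section RadicalAxis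

variable {E : Type*} [NormedAddCommGroup E] [InnerProductSpace ℝ E]

theorem dist_sq_sub_dist_sq_eq (z c c' : E) :
    dist z c' ^ 2 - dist z c ^ 2 = 2 * ⟪z, c - c'⟫ + (‖c'‖ ^ 2 - ‖c‖ ^ 2) := by
  rw [dist_eq_norm, dist_eq_norm, norm_sub_sq_real, norm_sub_sq_real, inner_sub_right]
  ring

theorem dist_sq_sub_dist_sq_smul_add_smul (c c' u v : E) {a b : ℝ} (hab : a + b = 1) :
    dist (a • u + b • v) c' ^ 2 - dist (a • u + b • v) c ^ 2 =
      a * (dist u c' ^ 2 - dist u c ^ 2) + b * (dist v c' ^ 2 - dist v c ^ 2) := by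
  simp only [dist_sq_sub_dist_sq_eq, inner_add_left, real_inner_smul_left]
  linear_combination (‖c‖ ^ 2 - ‖c'‖ ^ 2) * hab

theorem convexOn_dist_sq_sub_dist_sq (c c' : E) :
    ConvexOn ℝ univ fun z => dist z c' ^ 2 - dist z c ^ 2 :=
  ⟨convex_univ, fun u _ v _ _ _ _ _ hab => (dist_sq_sub_dist_sq_smul_add_smul c c' u v hab).le⟩

theorem concaveOn_dist_sq_sub_dist_sq (c c' : E) :
    ConcaveOn ℝ univ fun z => dist z c' ^ 2 - dist z c ^ 2 :=
  ⟨convex_univ, fun u _ v _ _ _ _ _ hab => (dist_sq_sub_dist_sq_smul_add_smul c c' u v hab).ge⟩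

theorem mem_closedBall_or_mem_closedBall_of_segment_inter_nonempty {c c' x y A B : E}
    {ρ ρ' : ℝ} (hA : A ∉ ball c ρ) (hB : B ∉ ball c ρ)
    (hA' : A ∈ closedBall c' ρ') (hB' : B ∈ closedBall c' ρ')
    (hx : x ∈ ball c ρ) (hy : y ∈ ball c ρ)
    (hmeet : (segment ℝ x y ∩ segment ℝ A B).Nonempty) :
    x ∈ closedBall c' ρ' ∨ y ∈ closedBall c' ρ' := by
  simp only [mem_ball, mem_closedBall, not_lt] at *
  by_contra! hout
  obtain ⟨w, hwxy, hwAB⟩ := hmeet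
  set ψ : E → ℝ := fun z => dist z c' ^ 2 - dist z c ^ 2
  have hρ : 0 ≤ ρ := dist_nonneg.trans hx.le
  have hρ' : 0 ≤ ρ' := dist_nonneg.trans hA'
  have hψ_lt {z : E} (hz : dist z c < ρ) (hz' : ρ' < dist z c') : ρ' ^ 2 - ρ ^ 2 < ψ z := by
    have : dist z c ^ 2 < ρ ^ 2 := by gcongr
    have : ρ' ^ 2 < dist z c' ^ 2 := by gcongr
    simp only [ψ]
    linarith
  have hψ_le {z : E} (hz : ρ ≤ dist z c) (hz' : dist z c' ≤ ρ') : ψ z ≤ ρ' ^ 2 - ρ ^ 2 := by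
    have : ρ ^ 2 ≤ dist z c ^ 2 := by gcongr
    have : dist z c' ^ 2 ≤ ρ' ^ 2 := by gcongr
    simp only [ψ]
    linarith
  have hw_gt : ρ' ^ 2 - ρ ^ 2 < ψ w :=
    (lt_min (hψ_lt hx hout.1) (hψ_lt hy hout.2)).trans_le
      ((concaveOn_dist_sq_sub_dist_sq c c').ge_on_segment trivial trivial hwxy)
  have hw_le : ψ w ≤ ρ' ^ 2 - ρ ^ 2 :=
    ((convexOn_dist_sq_sub_dist_sq c c').le_on_segment trivial trivial hwAB).trans
      (max_le (hψ_le hA hA') (hψ_le hB hB'))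
  exact hw_gt.not_ge hw_le

end RadicalAxis

theorem stmt_17_general (c : EuclideanSpace ℝ (Fin 2)) (ρ : ℝ)
    (x y A B : EuclideanSpace ℝ (Fin 2))
    (hA : A ∉ Metric.ball c ρ) (hB : B ∉ Metric.ball c ρ)
    (hx : x ∈ Metric.ball c ρ \ segment ℝ A B)
    (hy : y ∈ Metric.ball c ρ \ segment ℝ A B)
    (hcomp : connectedComponentIn (Metric.ball c ρ \ segment ℝ A B) x ≠
             connectedComponentIn (Metric.ball c ρ \ segment ℝ A B) y)
    (c' : EuclideanSpace ℝ (Fin 2)) (ρ' : ℝ)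
    (hA' : A ∈ Metric.sphere c' ρ') (hB' : B ∈ Metric.sphere c' ρ') :
    x ∈ Metric.closedBall c' ρ' ∨ y ∈ Metric.closedBall c' ρ' :=
  mem_closedBall_or_mem_closedBall_of_segment_inter_nonempty hA hB
    (sphere_subset_closedBall hA') (sphere_subset_closedBall hB') hx.1 hy.1
    ((convex_ball c ρ).segment_inter_nonempty_of_connectedComponentIn_ne hx.1 hy.1 hcomp)

/-- In the Euclidean plane, let `𝒞` be an open ball, `x, y ∈ 𝒞`, and `A, B ∉ 𝒞` with the
closed segment `[A,B]` meeting `𝒞`. Suppose `x` and `y` lie in two different connected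
components of `𝒞 \ [A,B]`. Then for every closed ball whose boundary sphere contains both
`A` and `B`, at least one of `x` and `y` belongs to that closed ball. -/
theorem stmt_17 (c : EuclideanSpace ℝ (Fin 2)) (ρ : ℝ)
    (x y A B : EuclideanSpace ℝ (Fin 2))
    (hA : A ∉ Metric.ball c ρ) (hB : B ∉ Metric.ball c ρ)
    (hmeet : (segment ℝ A B ∩ Metric.ball c ρ).Nonempty)
    (hx : x ∈ Metric.ball c ρ \ segment ℝ A B)
    (hy : y ∈ Metric.ball c ρ \ segment ℝ A B)
    (hcomp : connectedComponentIn (Metric.ball c ρ \ segment ℝ A B) x ≠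
             connectedComponentIn (Metric.ball c ρ \ segment ℝ A B) y)
    (c' : EuclideanSpace ℝ (Fin 2)) (ρ' : ℝ)
    (hA' : A ∈ Metric.sphere c' ρ') (hB' : B ∈ Metric.sphere c' ρ') :
    x ∈ Metric.closedBall c' ρ' ∨ y ∈ Metric.closedBall c' ρ' :=
  stmt_17_general c ρ x y A B hA hB hx hy hcomp c' ρ' hA' hB'
end

section
/- Let γ be a locally finite subset of the Euclidean plane ℝ² and let 𝒞 be an open Euclidean ball. Consider the simple graph whose vertex set is γ ∩ 𝒞 and in which two distinct points x, y ∈ γ ∩ 𝒞 are adjacent if and only if there exists a closed disk having x and y on its boundary circle and whose interior contains no point of γ (i.e. {x,y} is an edge of the Delaunay triangulation of γ). Then this graph is connected. -/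
/-!
Take `u, v ∈ γ ∩ 𝒞` with `v` at most as far from the centre of `𝒞` as `u`. The circle through
`u` and `v` that is internally tangent at `u` to the circle about the centre through `u` bounds
a closed disk inside `𝒞`. Now argue by induction on the number of points of `γ` inside a
closed disk `D ⊆ 𝒞` whose boundary passes through two points `x, y` of `γ`; this number is
finite by local finiteness. If the interior of `D` misses `γ`, then `x` and `y` are adjacent.
Otherwise pick `z ∈ γ` inside `D`: the disks through `x, z` tangent to `D` at `x` and through
`z, y` tangent to `D` at `y` lie in `D` and have `z` on their boundary, so they contain
strictly fewer points of `γ`.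
-/

open Metric
open scoped RealInnerProductSpace

variable {F : Type*} [NormedAddCommGroup F] [InnerProductSpace ℝ F]

/-- `r' + dist m' m = r` says that the new sphere touches the old one from inside, at `x`. -/
theorem exists_inscribed_sphere_through {m x z : F} {r : ℝ} (hx : dist x m = r)
    (hz : dist z m ≤ r) (hzx : z ≠ x) :
    ∃ (m' : F) (r' : ℝ), dist x m' = r' ∧ dist z m' = r' ∧ r' + dist m' m = r := by
  set a := z - x
  set b := m - x
  have hb : ‖b‖ = r := by rw [← dist_eq_norm, dist_comm, hx]
  have hab : ‖a - b‖ ≤ r := by rwa [show a - b = z - m by simp only [a, b]; abel, ← dist_eq_norm]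
  have ha : 0 < ‖a‖ := norm_pos_iff.2 (sub_ne_zero.2 hzx)
  have hab_sq : ‖a‖ ^ 2 ≤ 2 * ⟪a, b⟫ := by
    nlinarith [norm_sub_sq_real a b, norm_nonneg (a - b)]
  have hs : 0 < ⟪a, b⟫ := by nlinarith
  -- the centre `x + t • b` is equidistant from `x` and `z` exactly for this `t`
  set t := ‖a‖ ^ 2 / (2 * ⟪a, b⟫)
  have ht : 2 * t * ⟪a, b⟫ = ‖a‖ ^ 2 := by unfold t; field_simp
  have ht0 : 0 ≤ t := by positivity
  have ht1 : t ≤ 1 := (div_le_one (by positivity)).2 hab_sq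
  refine ⟨x + t • b, t * r, ?_, ?_, ?_⟩
  · rw [dist_eq_norm, show x - (x + t • b) = -(t • b) by abel, norm_neg, norm_smul,
      Real.norm_of_nonneg ht0, hb]
  · have hsq : ‖a - t • b‖ ^ 2 = (t * r) ^ 2 := by
      rw [norm_sub_sq_real, real_inner_smul_right, norm_smul, Real.norm_of_nonneg ht0, hb]
      linear_combination -ht
    rw [dist_eq_norm, show z - (x + t • b) = a - t • b by simp only [a]; abel]
    exact (sq_eq_sq₀ (norm_nonneg _) (by nlinarith [norm_nonneg b])).1 hsq
  · rw [dist_eq_norm, show x + t • b - m = (t - 1) • b by simp only [b, sub_smul, one_smul]; abel,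
      norm_smul, Real.norm_of_nonpos (by linarith), hb]
    ring

theorem reachable_of_mem_sphere {γ U : Set F}
    (hγ : ∀ (m : F) (r : ℝ), (γ ∩ ball m r).Finite) (G : SimpleGraph ↥(γ ∩ U))
    (hG : ∀ a b : ↥(γ ∩ U), a ≠ b → ∀ (m : F) (r : ℝ), dist (a : F) m = r →
      dist (b : F) m = r → (∀ z ∈ γ, r ≤ dist z m) → G.Adj a b)
    {m : F} {r : ℝ} (hU : closedBall m r ⊆ U) {x y : ↥(γ ∩ U)}
    (hx : dist (x : F) m = r) (hy : dist (y : F) m = r) : G.Reachable x y := by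
  induction hn : (γ ∩ ball m r).ncard using Nat.strong_induction_on generalizing m r x y with
  | _ n ih =>
  by_cases hempty : ∀ z ∈ γ, r ≤ dist z m
  · obtain rfl | hxy := eq_or_ne x y
    · rfl
    · exact (hG x y hxy m r hx hy hempty).reachable
  push Not at hempty
  obtain ⟨z, hzγ, hzm⟩ := hempty
  let z' : ↥(γ ∩ U) := ⟨z, hzγ, hU (mem_closedBall.2 hzm.le)⟩
  have reach_z : ∀ w : ↥(γ ∩ U), dist (w : F) m = r → G.Reachable w z' := by
    intro w hw
    obtain ⟨m', r', hwm', hzm', hr'⟩ :=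
      exists_inscribed_sphere_through hw hzm.le fun h => hzm.ne (h ▸ hw)
    have hsub : γ ∩ ball m' r' ⊂ γ ∩ ball m r :=
      (Set.inter_subset_inter_right γ (ball_subset_ball' hr'.le)).ssubset_of_mem_notMem
        ⟨hzγ, hzm⟩ (fun h => (mem_ball.1 h.2).ne hzm')
    exact ih _ (hn ▸ Set.ncard_lt_ncard hsub (hγ m r))
      ((closedBall_subset_closedBall' hr'.le).trans hU) hwm' hzm' rfl
  exact (reach_z x hx).trans (reach_z y hy).symm

/-- Let `γ` be a locally finite subset of the Euclidean plane and `𝒞` an open Euclidean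
ball. Consider the simple graph on the vertex set `γ ∩ 𝒞` in which two distinct points are
adjacent iff there is a closed disk having both of them on its boundary circle and no point
of `γ` in its interior (a Delaunay edge of `γ`). Then this graph is connected. -/
theorem stmt_18 (γ : Set (EuclideanSpace ℝ (Fin 2)))
    (hγ : ∀ s : Set (EuclideanSpace ℝ (Fin 2)), Bornology.IsBounded s → (γ ∩ s).Finite)
    (c : EuclideanSpace ℝ (Fin 2)) (ρ : ℝ)
    (G : SimpleGraph ↥(γ ∩ Metric.ball c ρ))
    (hG : ∀ a b : ↥(γ ∩ Metric.ball c ρ),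
      G.Adj a b ↔ a ≠ b ∧
        ∃ (c' : EuclideanSpace ℝ (Fin 2)) (ρ' : ℝ),
          dist (a : EuclideanSpace ℝ (Fin 2)) c' = ρ' ∧
          dist (b : EuclideanSpace ℝ (Fin 2)) c' = ρ' ∧
          ∀ z ∈ γ, ρ' ≤ dist z c') :
    G.Preconnected := by
  have reach : ∀ u v : ↥(γ ∩ ball c ρ),
      dist (v : EuclideanSpace ℝ (Fin 2)) c ≤ dist (u : EuclideanSpace ℝ (Fin 2)) c →
      G.Reachable u v := by
    intro u v hvu
    obtain rfl | huv := eq_or_ne u v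
    · rfl
    obtain ⟨m, r, hum, hvm, hr⟩ :=
      exists_inscribed_sphere_through rfl hvu (Subtype.coe_injective.ne huv.symm)
    exact reachable_of_mem_sphere (fun m r => hγ _ isBounded_ball) G
      (fun a b hab m r ha hb hm => (hG a b).2 ⟨hab, m, r, ha, hb, hm⟩)
      (closedBall_subset_ball' (hr ▸ u.2.2)) hum hvm
  intro u v
  rcases le_total (dist (v : EuclideanSpace ℝ (Fin 2)) c)
      (dist (u : EuclideanSpace ℝ (Fin 2)) c) with h | h
  · exact reach u v h
  · exact (reach v u h).symm
end

section
/- Let x ≠ y be two points of the Euclidean plane ℝ² and let γ ⊆ ℝ². Suppose there exists a closed ball D with x and y on its boundary sphere whose interior contains no point of γ. Let m = (x+y)/2 and define the two open half-disks of the disk with diameter [x,y]: H⁺ = {z ∈ ℝ² : ‖z − m‖ < ‖x − y‖/2 and det(y − x, z − x) > 0} and H⁻ = {z ∈ ℝ² : ‖z − m‖ < ‖x − y‖/2 and det(y − x, z − x) < 0}, where det(u, v) denotes the determinant of the 2×2 matrix with columns u and v. Then H⁺ ∩ γ = ∅ or H⁻ ∩ γ = ∅. -/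
private lemma key19 (x0 x1 y0 y1 c0 c1 z0 z1 ρ : ℝ)
    (hL : 0 < (y0-x0)^2+(y1-x1)^2)
    (hx : (x0-c0)^2+(x1-c1)^2 = ρ^2)
    (hy : (y0-c0)^2+(y1-c1)^2 = ρ^2)
    (hz : (z0-(x0+y0)/2)^2+(z1-(x1+y1)/2)^2 < ((y0-x0)^2+(y1-x1)^2)/4)
    (hdet : 0 ≤ ((y0-x0)*(z1-x1) - (y1-x1)*(z0-x0)) * ((y0-x0)*(c1-x1) - (y1-x1)*(c0-x0))) :
    (z0-c0)^2+(z1-c1)^2 < ρ^2 := by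
  have hP : (y0-x0)*(c0 - (x0+y0)/2) + (y1-x1)*(c1 - (x1+y1)/2) = 0 := by
    linear_combination (hx - hy) / 2
  have h1 := mul_lt_mul_of_pos_left (sub_neg.mpr hz) hL
  have h2 : ((y0-x0)^2+(y1-x1)^2) * ((z0-c0)^2+(z1-c1)^2 - ρ^2) < 0 := by
    have key : ((y0-x0)^2+(y1-x1)^2) * ((z0-c0)^2+(z1-c1)^2 - ((x0-c0)^2+(x1-c1)^2)) =
        ((y0-x0)^2+(y1-x1)^2) * ((z0-(x0+y0)/2)^2+(z1-(x1+y1)/2)^2 - ((y0-x0)^2+(y1-x1)^2)/4)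
        - 2*(((y0-x0)*(z1-x1) - (y1-x1)*(z0-x0)) * ((y0-x0)*(c1-x1) - (y1-x1)*(c0-x0)))
        - 2*((z0-x0)*(y0-x0)+(z1-x1)*(y1-x1)) * ((y0-x0)*(c0 - (x0+y0)/2) + (y1-x1)*(c1 - (x1+y1)/2)) := by
      ring
    rw [hP, hx] at key
    linarith [key, h1, hdet]
  by_contra hcon
  push_neg at hcon
  have := mul_nonneg hL.le (sub_nonneg.mpr hcon)
  linarith

private lemma distsq19 (a b : EuclideanSpace ℝ (Fin 2)) :
    dist a b ^ 2 = (a 0 - b 0)^2 + (a 1 - b 1)^2 := by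
  rw [EuclideanSpace.dist_eq, Real.sq_sqrt (by positivity)]
  simp [Fin.sum_univ_two, Real.dist_eq, sq_abs]

/-- Let `x ≠ y` in the Euclidean plane and `γ ⊆ ℝ²`. Suppose there is a closed ball with
`x` and `y` on its boundary sphere and no point of `γ` in its interior. With
`m = (x+y)/2`, consider the two open half-disks of the disk with diameter `[x,y]`:
`H⁺ = {z : ‖z−m‖ < ‖x−y‖/2, det(y−x, z−x) > 0}` and
`H⁻ = {z : ‖z−m‖ < ‖x−y‖/2, det(y−x, z−x) < 0}`.
Then `H⁺ ∩ γ = ∅` or `H⁻ ∩ γ = ∅`. -/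
theorem stmt_19 (x y : EuclideanSpace ℝ (Fin 2)) (hxy : x ≠ y)
    (γ : Set (EuclideanSpace ℝ (Fin 2)))
    (hD : ∃ (c : EuclideanSpace ℝ (Fin 2)) (ρ : ℝ),
      dist x c = ρ ∧ dist y c = ρ ∧ ∀ z ∈ γ, ρ ≤ dist z c) :
    ({z : EuclideanSpace ℝ (Fin 2) |
        dist z ((2:ℝ)⁻¹ • (x + y)) < dist x y / 2 ∧
        0 < (y - x) 0 * (z - x) 1 - (y - x) 1 * (z - x) 0} ∩ γ = ∅) ∨
    ({z : EuclideanSpace ℝ (Fin 2) |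
        dist z ((2:ℝ)⁻¹ • (x + y)) < dist x y / 2 ∧
        (y - x) 0 * (z - x) 1 - (y - x) 1 * (z - x) 0 < 0} ∩ γ = ∅) := by
  obtain ⟨c, ρ, hxc, hyc, hγ⟩ := hD
  have hρ0 : 0 ≤ ρ := hxc ▸ dist_nonneg
  have hL : 0 < (y 0 - x 0)^2 + (y 1 - x 1)^2 := by
    have h := dist_pos.mpr hxy
    have h2 : 0 < dist x y ^ 2 := by positivity
    rw [distsq19] at h2
    linarith
  have hxc2 : (x 0 - c 0)^2 + (x 1 - c 1)^2 = ρ^2 := by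
    rw [← distsq19, hxc]
  have hyc2 : (y 0 - c 0)^2 + (y 1 - c 1)^2 = ρ^2 := by
    rw [← distsq19, hyc]
  -- common step: from half-disk data with correct det sign product, contradiction
  have main : ∀ z ∈ γ, dist z ((2:ℝ)⁻¹ • (x + y)) < dist x y / 2 →
      0 ≤ ((y 0 - x 0) * (z 1 - x 1) - (y 1 - x 1) * (z 0 - x 0)) *
          ((y 0 - x 0) * (c 1 - x 1) - (y 1 - x 1) * (c 0 - x 0)) → False := by
    intro z hzγ hz1 hdet
    have hzm : (z 0 - (x 0 + y 0)/2)^2 + (z 1 - (x 1 + y 1)/2)^2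
        < ((y 0 - x 0)^2 + (y 1 - x 1)^2)/4 := by
      have h := pow_lt_pow_left₀ hz1 dist_nonneg two_ne_zero
      rw [distsq19] at h
      have hm0 : ((2:ℝ)⁻¹ • (x + y)) 0 = (x 0 + y 0)/2 := by
        simp [PiLp.smul_apply, PiLp.add_apply]; ring
      have hm1 : ((2:ℝ)⁻¹ • (x + y)) 1 = (x 1 + y 1)/2 := by
        simp [PiLp.smul_apply, PiLp.add_apply]; ring
      rw [hm0, hm1] at h
      have hd : (dist x y / 2)^2 = ((y 0 - x 0)^2 + (y 1 - x 1)^2)/4 := by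
        rw [div_pow, distsq19]; ring
      rw [hd] at h
      exact h
    have hlt := key19 (x 0) (x 1) (y 0) (y 1) (c 0) (c 1) (z 0) (z 1) ρ hL hxc2 hyc2 hzm hdet
    have hge := hγ z hzγ
    have : dist z c ^ 2 < ρ ^ 2 := by rw [distsq19]; exact hlt
    have := lt_of_pow_lt_pow_left₀ 2 hρ0 this
    linarith
  rcases le_or_gt 0 ((y 0 - x 0) * (c 1 - x 1) - (y 1 - x 1) * (c 0 - x 0)) with h | h
  · left
    rw [Set.eq_empty_iff_forall_notMem]
    rintro z ⟨⟨hz1, hz2⟩, hzγ⟩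
    have hz2' : 0 < (y 0 - x 0) * (z 1 - x 1) - (y 1 - x 1) * (z 0 - x 0) := by
      simpa [PiLp.sub_apply] using hz2
    exact main z hzγ hz1 (mul_nonneg hz2'.le h)
  · right
    rw [Set.eq_empty_iff_forall_notMem]
    rintro z ⟨⟨hz1, hz2⟩, hzγ⟩
    have hz2' : (y 0 - x 0) * (z 1 - x 1) - (y 1 - x 1) * (z 0 - x 0) < 0 := by
      simpa [PiLp.sub_apply] using hz2
    refine main z hzγ hz1 ?_
    have := mul_nonneg (neg_nonneg.mpr hz2'.le) (neg_nonneg.mpr h.le)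
    linarith [this]
end
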